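/- arXiv:1604.05997 — 5 statements merged into one kernel-verified Lean document; each statement's English description precedes it below -/
import Mathlib

section
/- Let G be a group, let k₁, k₂, k₃, k₄ ∈ G, let L₁, L₂, L₃, L₄ ⊆ G be pairwise disjoint subsets, and let u ⊆ G be a finite nonempty set such that |u ∩ (kᵢ⁻¹ · Lᵢ)| ≥ |u|/2 for each i = 1,...,4. Then |{k₁,k₂,k₃,k₄} · u| ≥ 2|u|, where {k₁,...,k₄} · u = {kᵢ g : 1 ≤ i ≤ 4, g ∈ u}. -/
theorem stmt_2 {G : Type*} [Group G] [DecidableEq G]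
    (k : Fin 4 → G) (L : Fin 4 → Set G)
    (hdisj : Pairwise (Function.onFun Disjoint L))
    (u : Finset G) (hu : u.Nonempty)
    (hbig : ∀ i : Fin 4, u.card ≤ 2 * {g ∈ (u : Set G) | k i * g ∈ L i}.ncard) :
    2 * u.card ≤ (Finset.univ.biUnion fun i : Fin 4 => u.image fun g => k i * g).card := by
  classical
  set A : Fin 4 → Finset G := fun i => u.filter (fun g => k i * g ∈ L i) with hA
  have hAcard : ∀ i, {g ∈ (u : Set G) | k i * g ∈ L i}.ncard = (A i).card := by
    intro i
    rw [show {g ∈ (u : Set G) | k i * g ∈ L i} = ((A i : Finset G) : Set G) by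
      ext g; simp [hA]]
    exact Set.ncard_coe_finset _
  set B : Fin 4 → Finset G := fun i => (A i).image (fun g => k i * g) with hB
  have hBcard : ∀ i, (B i).card = (A i).card := fun i =>
    Finset.card_image_of_injective _ (mul_right_injective (k i))
  have hBsub : ∀ i, (B i : Set G) ⊆ L i := by
    intro i g hg
    simp only [hB, Finset.coe_image, Set.mem_image, Finset.mem_coe, hA,
      Finset.mem_filter] at hg
    obtain ⟨x, ⟨-, hx⟩, rfl⟩ := hg
    exact hx
  have hBdisj : ∀ i ∈ (Finset.univ : Finset (Fin 4)), ∀ j ∈ Finset.univ,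
      i ≠ j → Disjoint (B i) (B j) := by
    intro i _ j _ hij
    have := (hdisj hij).mono (hBsub i) (hBsub j)
    exact Finset.disjoint_coe.mp this
  have hsub : (Finset.univ.biUnion B) ⊆
      (Finset.univ.biUnion fun i : Fin 4 => u.image fun g => k i * g) := by
    intro x hx
    simp only [Finset.mem_biUnion, Finset.mem_univ, true_and] at hx ⊢
    obtain ⟨i, hi⟩ := hx
    exact ⟨i, Finset.image_subset_image (Finset.filter_subset _ _) hi⟩
  have hcard : (Finset.univ.biUnion B).card = ∑ i, (B i).card :=
    Finset.card_biUnion hBdisj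
  have hsum : 2 * u.card ≤ ∑ i, (B i).card := by
    have h4 : 4 * u.card ≤ ∑ i, 2 * (B i).card := by
      have : ∀ i : Fin 4, u.card ≤ 2 * (B i).card := by
        intro i
        have := hbig i
        rwa [hAcard, ← hBcard] at this
      calc 4 * u.card = ∑ _i : Fin 4, u.card := by simp [mul_comm]
        _ ≤ ∑ i, 2 * (B i).card := Finset.sum_le_sum (fun i _ => this i)
    rw [← Finset.mul_sum] at h4
    omega
  calc 2 * u.card ≤ ∑ i, (B i).card := hsum
    _ = (Finset.univ.biUnion B).card := hcard.symm
    _ ≤ _ := Finset.card_le_card hsub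
end

section
/- Let G be a group and T ⊆ G a finite subset such that |T · u| ≥ 2|u| for every finite subset u ⊆ G. Set S₁ = T ∪ {1} and S₂ = T. Then for all finite subsets u₁, u₂ ⊆ G, |S₁ · u₁ ∪ S₂ · u₂| ≥ |u₁| + |u₂|. -/
open scoped Pointwise

theorem stmt_3 {G : Type*} [Group G] [DecidableEq G] (T : Finset G)
    (hT : ∀ u : Finset G, 2 * u.card ≤ (T * u).card) :
    ∀ u₁ u₂ : Finset G,
      u₁.card + u₂.card ≤ (((T ∪ {1}) * u₁) ∪ (T * u₂)).card := by
  intro u₁ u₂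
  have hsub : T * (u₁ ∪ u₂) ⊆ ((T ∪ {1}) * u₁) ∪ (T * u₂) := by
    rw [Finset.mul_union]
    exact Finset.union_subset_union
      (Finset.mul_subset_mul_right Finset.subset_union_left) (le_refl _)
  calc u₁.card + u₂.card ≤ 2 * (u₁ ∪ u₂).card := by
        have h1 := Finset.card_le_card (Finset.subset_union_left (α := G) (s₁ := u₁) (s₂ := u₂))
        have h2 := Finset.card_le_card (Finset.subset_union_right (α := G) (s₁ := u₁) (s₂ := u₂))
        omega
    _ ≤ (T * (u₁ ∪ u₂)).card := hT _
    _ ≤ _ := Finset.card_le_card hsub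
end

section
/- Let G be a group and suppose there exist finite subsets S₁, S₂ ⊆ G such that |S₁·u₁ ∪ S₂·u₂| ≥ |u₁| + |u₂| for all finite subsets u₁, u₂ ⊆ G. Then G admits a paradoxical decomposition with at most |S₁| + |S₂| pieces; in particular the Tarski number of G is at most |S₁| + |S₂|. -/
open scoped Pointwise

/-- A paradoxical decomposition of a group `G` with `n + m` pieces. -/
def IsParadoxicalDecomp (G : Type*) [Group G] (n m : ℕ) : Prop :=
  ∃ (S : Fin n → Set G) (T : Fin m → Set G) (s : Fin n → G) (t : Fin m → G),
    Pairwise (Function.onFun Disjoint (Sum.elim S T)) ∧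
    ((⋃ i, S i) ∪ (⋃ j, T j) = Set.univ) ∧
    (⋃ i, s i • S i) = Set.univ ∧ (⋃ j, t j • T j) = Set.univ

/-- The Tarski number of a group: the least number of pieces in a paradoxical
decomposition (`⊤` if the group is not paradoxical, i.e. amenable). -/
noncomputable def TarskiNumber (G : Type*) [Group G] : ℕ∞ :=
  sInf {k | ∃ n m : ℕ, k = (n : ℕ∞) + m ∧ IsParadoxicalDecomp G n m}

theorem stmt_11 {G : Type*} [Group G] [DecidableEq G] (S₁ S₂ : Finset G)
    (h : ∀ u₁ u₂ : Finset G, u₁.card + u₂.card ≤ ((S₁ * u₁) ∪ (S₂ * u₂)).card) :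
    (∃ n m : ℕ, n + m ≤ S₁.card + S₂.card ∧ IsParadoxicalDecomp G n m) ∧
    TarskiNumber G ≤ (S₁.card + S₂.card : ℕ) := by
  classical
  -- S₁ is nonempty
  have hS₁ : S₁.Nonempty := by
    by_contra h1
    have := h {1} ∅
    simp [Finset.not_nonempty_iff_eq_empty.mp h1] at this
  -- the bipartite neighborhood function
  set t : G ⊕ G → Finset G :=
    Sum.elim (fun g => S₁.image (· * g)) (fun g => S₂.image (· * g)) with ht
  have hall : ∀ s : Finset (G ⊕ G), s.card ≤ (s.biUnion t).card := by
    intro s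
    have key : s.biUnion t = (S₁ * s.toLeft) ∪ (S₂ * s.toRight) := by
      ext x
      simp only [Finset.mem_biUnion, Finset.mem_union, Finset.mem_mul,
        Finset.mem_toLeft, Finset.mem_toRight, ht]
      constructor
      · rintro ⟨a, ha, hx⟩
        rcases a with g | g
        · simp only [Sum.elim_inl, Finset.mem_image] at hx
          obtain ⟨b, hb, hbx⟩ := hx
          exact Or.inl ⟨b, hb, g, ha, hbx⟩
        · simp only [Sum.elim_inr, Finset.mem_image] at hx
          obtain ⟨b, hb, hbx⟩ := hx
          exact Or.inr ⟨b, hb, g, ha, hbx⟩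
      · rintro (⟨b, hb, g, hg, hbx⟩ | ⟨b, hb, g, hg, hbx⟩)
        · exact ⟨Sum.inl g, hg, by simp only [Sum.elim_inl, Finset.mem_image]; exact ⟨b, hb, hbx⟩⟩
        · exact ⟨Sum.inr g, hg, by simp only [Sum.elim_inr, Finset.mem_image]; exact ⟨b, hb, hbx⟩⟩
    rw [key, ← Finset.card_toLeft_add_card_toRight (u := s)]
    exact h _ _
  obtain ⟨f, hfinj, hf⟩ := (Finset.all_card_le_biUnion_card_iff_exists_injective t).mp hall
  -- choose the translating element for each g
  have h1 : ∀ g : G, ∃ b : G, b ∈ S₁ ∧ b * g = f (Sum.inl g) := by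
    intro g
    have := hf (Sum.inl g)
    simp only [ht, Sum.elim_inl, Finset.mem_image] at this
    exact this
  have h2 : ∀ g : G, ∃ b : G, b ∈ S₂ ∧ b * g = f (Sum.inr g) := by
    intro g
    have := hf (Sum.inr g)
    simp only [ht, Sum.elim_inr, Finset.mem_image] at this
    exact this
  choose σ₁ hσ₁S hσ₁ using h1
  choose σ₂ hσ₂S hσ₂ using h2
  set n := S₁.card with hn
  set m := S₂.card with hm
  have hn0 : 0 < n := Finset.card_pos.mpr hS₁
  set e₁ : S₁ ≃ Fin n := S₁.equivFin with he₁
  set e₂ : S₂ ≃ Fin m := S₂.equivFin with he₂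
  set ι₁ : G → Fin n := fun g => e₁ ⟨σ₁ g, hσ₁S g⟩ with hι₁
  set ι₂ : G → Fin m := fun g => e₂ ⟨σ₂ g, hσ₂S g⟩ with hι₂
  set i₀ : Fin n := ⟨0, hn0⟩ with hi₀
  set L : Set G := {x | x ∉ Set.range f} with hL
  set A : Fin n → Set G := fun i =>
    {x | ∃ g, ι₁ g = i ∧ x = f (Sum.inl g)} ∪ (if i = i₀ then L else ∅) with hA
  set B : Fin m → Set G := fun j => {x | ∃ g, ι₂ g = j ∧ x = f (Sum.inr g)} with hB
  have hdec : IsParadoxicalDecomp G n m := by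
    refine ⟨A, B, fun i => ((e₁.symm i : S₁) : G)⁻¹, fun j => ((e₂.symm j : S₂) : G)⁻¹,
      ?_, ?_, ?_, ?_⟩
    · -- pairwise disjoint
      intro x y hxy
      have hAL : ∀ i x, x ∈ A i → (∃ g, ι₁ g = i ∧ x = f (Sum.inl g)) ∨ (i = i₀ ∧ x ∈ L) := by
        intro i x hx
        rcases hx with hx | hx
        · exact Or.inl hx
        · by_cases hii : i = i₀
          · simp only [hii, if_pos rfl] at hx; exact Or.inr ⟨hii, hx⟩
          · simp [hii] at hx
      rcases x with i | j <;> rcases y with i' | j' <;>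
        (rw [Function.onFun]; simp only [Sum.elim_inl, Sum.elim_inr];
         rw [Set.disjoint_left]; intro z hz hz')
      · -- both left
        rcases hAL i z hz with ⟨g, hg, rfl⟩ | ⟨rfl, hzL⟩
        · rcases hAL i' _ hz' with ⟨g', hg', he⟩ | ⟨rfl, hzL⟩
          · have hgg : g = g' := Sum.inl_injective (hfinj he)
            exact hxy (by simp [← hg, ← hg', hgg])
          · exact hzL ⟨Sum.inl g, rfl⟩
        · rcases hAL i' _ hz' with ⟨g', hg', rfl⟩ | ⟨rfl, hzL2⟩
          · exact hzL ⟨Sum.inl g', rfl⟩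
          · exact hxy rfl
      · -- left / right
        rcases hAL i z hz with ⟨g, hg, rfl⟩ | ⟨rfl, hzL⟩
        · obtain ⟨g', hg', he⟩ := hz'
          exact absurd (hfinj he) (by simp)
        · obtain ⟨g', hg', he⟩ := hz'
          exact hzL ⟨Sum.inr g', he.symm⟩
      · -- right / left
        obtain ⟨g, hg, rfl⟩ := hz
        rcases hAL i' _ hz' with ⟨g', hg', he⟩ | ⟨rfl, hzL⟩
        · exact absurd (hfinj he.symm) (by simp)
        · exact hzL ⟨Sum.inr g, rfl⟩
      · -- both right
        obtain ⟨g, hg, rfl⟩ := hz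
        obtain ⟨g', hg', he⟩ := hz'
        have hgg : g = g' := Sum.inr_injective (hfinj he)
        exact hxy (by simp [← hg, ← hg', hgg])
    · -- covers G
      apply Set.eq_univ_of_forall
      intro x
      by_cases hx : x ∈ Set.range f
      · obtain ⟨a, rfl⟩ := hx
        rcases a with g | g
        · exact Or.inl (Set.mem_iUnion.mpr ⟨ι₁ g, Or.inl ⟨g, rfl, rfl⟩⟩)
        · exact Or.inr (Set.mem_iUnion.mpr ⟨ι₂ g, g, rfl, rfl⟩)
      · refine Or.inl (Set.mem_iUnion.mpr ⟨i₀, Or.inr ?_⟩)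
        rw [if_pos rfl]
        exact hx
    · -- translated left pieces cover G
      apply Set.eq_univ_of_forall
      intro g
      refine Set.mem_iUnion.mpr ⟨ι₁ g, ?_⟩
      refine ⟨f (Sum.inl g), Or.inl ⟨g, rfl, rfl⟩, ?_⟩
      have h1 : ((e₁.symm (ι₁ g) : S₁) : G) = σ₁ g := by simp [hι₁]
      show ((e₁.symm (ι₁ g) : S₁) : G)⁻¹ • f (Sum.inl g) = g
      rw [h1, ← hσ₁ g, smul_eq_mul, inv_mul_cancel_left]
    · -- translated right pieces cover G
      apply Set.eq_univ_of_forall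
      intro g
      refine Set.mem_iUnion.mpr ⟨ι₂ g, ?_⟩
      refine ⟨f (Sum.inr g), ⟨g, rfl, rfl⟩, ?_⟩
      have h2 : ((e₂.symm (ι₂ g) : S₂) : G) = σ₂ g := by simp [hι₂]
      show ((e₂.symm (ι₂ g) : S₂) : G)⁻¹ • f (Sum.inr g) = g
      rw [h2, ← hσ₂ g, smul_eq_mul, inv_mul_cancel_left]
  refine ⟨⟨n, m, le_refl _, hdec⟩, ?_⟩
  have hmem : ((n : ℕ∞) + m) ∈ {k | ∃ n m : ℕ, k = (n : ℕ∞) + m ∧ IsParadoxicalDecomp G n m} :=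
    ⟨n, m, rfl, hdec⟩
  calc TarskiNumber G ≤ (n : ℕ∞) + m := sInf_le hmem
    _ = ((S₁.card + S₂.card : ℕ) : ℕ∞) := by push_cast [hn, hm]; ring
end

section
/- Let G be a group with a finite subset T such that 1 ∈ T, |T| = 13, and |T·u| ≥ 2|u| for every finite subset u ⊆ G. Then the Tarski number of G is at most 25. -/
open scoped Pointwise

theorem stmt_14 {G : Type*} [Group G] [DecidableEq G] (T : Finset G)
    (hone : (1 : G) ∈ T) (hcard : T.card = 13)
    (hT : ∀ u : Finset G, 2 * u.card ≤ (T * u).card) :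
    TarskiNumber G ≤ 25 := by
  classical
  -- Hall's marriage theorem
  obtain ⟨f, finj, hf⟩ : ∃ f : G × Fin 2 → G, Function.Injective f ∧
      ∀ x : G × Fin 2, f x ∈ T.image (· * x.1) := by
    rw [← Finset.all_card_le_biUnion_card_iff_exists_injective]
    intro s
    have h1 : s ⊆ (s.image Prod.fst) ×ˢ (Finset.univ : Finset (Fin 2)) := by
      intro x hx
      rw [Finset.mem_product]
      exact ⟨Finset.mem_image_of_mem _ hx, Finset.mem_univ _⟩
    have h2 : s.card ≤ 2 * (s.image Prod.fst).card := by
      calc s.card ≤ ((s.image Prod.fst) ×ˢ (Finset.univ : Finset (Fin 2))).card :=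
            Finset.card_le_card h1
        _ = 2 * (s.image Prod.fst).card := by
            rw [Finset.card_product]; simp [mul_comm]
    have h3 : T * (s.image Prod.fst) ⊆ s.biUnion (fun x => T.image (· * x.1)) := by
      intro y hy
      rw [Finset.mem_mul] at hy
      obtain ⟨t, ht, g, hg, rfl⟩ := hy
      obtain ⟨x, hx, hx1⟩ := Finset.mem_image.mp hg
      exact Finset.mem_biUnion.mpr ⟨x, hx, Finset.mem_image.mpr ⟨t, ht, by rw [hx1]⟩⟩
    exact h2.trans ((hT _).trans (Finset.card_le_card h3))
  set F : G × Fin 2 → G := fun x => f (x.1, if f (x.1, 1) = x.1 then x.2 + 1 else x.2) with hFdef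
  have Finj : Function.Injective F := by
    intro x y hxy
    have h := finj hxy
    rw [Prod.mk.injEq] at h
    obtain ⟨h1, h2⟩ := h
    rw [h1] at h2
    refine Prod.ext h1 ?_
    by_cases hc : f (y.1, 1) = y.1 <;> simp only [hc, if_true, if_false] at h2
    · exact add_right_cancel h2
    · exact h2
  have hFmem : ∀ (g : G) (i : Fin 2), ∃ t ∈ T, F (g, i) = t * g := by
    intro g i
    obtain ⟨t, ht, hteq⟩ := Finset.mem_image.mp (hf (g, if f (g, 1) = g then i + 1 else i))
    exact ⟨t, ht, hteq.symm⟩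
  have hF1ne : ∀ g : G, F (g, 1) ≠ g := by
    intro g
    by_cases hc : f (g, 1) = g
    · have h : F (g, 1) = f (g, (0 : Fin 2)) := by
        simp only [hFdef, hc, if_true]
        exact congrArg (fun j => f (g, j)) (by decide)
      rw [h]
      intro hcon
      have h2 := finj (hcon.trans hc.symm)
      rw [Prod.mk.injEq] at h2
      exact absurd h2.2 (by decide)
    · intro h
      apply hc
      simpa only [hFdef, if_neg hc] using h
  have h0 : ∀ g : G, ∃ t, t ∈ T ∧ F (g, 0) = t * g := by
    intro g; obtain ⟨t, ht, h⟩ := hFmem g 0; exact ⟨t, ht, h⟩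
  have h1 : ∀ g : G, ∃ t, t ∈ T.erase 1 ∧ F (g, 1) = t * g := by
    intro g
    obtain ⟨t, ht, h⟩ := hFmem g 1
    refine ⟨t, Finset.mem_erase.mpr ⟨?_, ht⟩, h⟩
    rintro rfl
    exact hF1ne g (by rw [h, one_mul])
  choose t₁ ht₁T ht₁ using h0
  choose t₂ ht₂T ht₂ using h1
  have hcard' : (T.erase 1).card = 12 := by
    rw [Finset.card_erase_of_mem hone, hcard]
  let e₁ : Fin 13 ≃ {x // x ∈ T} := (Finset.equivFinOfCardEq hcard).symm
  let e₂ : Fin 12 ≃ {x // x ∈ T.erase 1} := (Finset.equivFinOfCardEq hcard').symm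
  set C : G → Set G := fun a => {x | ∃ g, t₁ g = a ∧ F (g, 0) = x} with hCdef
  set D : G → Set G := fun a => {x | ∃ g, t₂ g = a ∧ F (g, 1) = x} with hDdef
  set L : Set G := (Set.range F)ᶜ with hLdef
  set S : Fin 13 → Set G := fun i => C (e₁ i) ∪ (if (e₁ i : G) = 1 then L else ∅) with hSdef
  set Tt : Fin 12 → Set G := fun j => D (e₂ j) with hTtdef
  -- disjointness lemmas
  have hCC : ∀ a b : G, a ≠ b → Disjoint (C a) (C b) := by
    intro a b hab
    rw [Set.disjoint_left]
    rintro x ⟨g, hg, hgx⟩ ⟨g', hg', hgx'⟩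
    have hgg : g = g' := congrArg Prod.fst (Finj (hgx.trans hgx'.symm))
    exact hab (hg.symm.trans (hgg ▸ hg'))
  have hDD : ∀ a b : G, a ≠ b → Disjoint (D a) (D b) := by
    intro a b hab
    rw [Set.disjoint_left]
    rintro x ⟨g, hg, hgx⟩ ⟨g', hg', hgx'⟩
    have hgg : g = g' := congrArg Prod.fst (Finj (hgx.trans hgx'.symm))
    exact hab (hg.symm.trans (hgg ▸ hg'))
  have hCD : ∀ a b : G, Disjoint (C a) (D b) := by
    intro a b
    rw [Set.disjoint_left]
    rintro x ⟨g, _, hgx⟩ ⟨g', _, hgx'⟩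
    have h2 := Finj (hgx.trans hgx'.symm)
    rw [Prod.mk.injEq] at h2
    exact absurd h2.2 (by decide)
  have hLC : ∀ a : G, Disjoint L (C a) := by
    intro a
    rw [Set.disjoint_left]
    rintro x hx ⟨g, _, hgx⟩
    exact hx ⟨(g, 0), hgx⟩
  have hLD : ∀ a : G, Disjoint L (D a) := by
    intro a
    rw [Set.disjoint_left]
    rintro x hx ⟨g, _, hgx⟩
    exact hx ⟨(g, 1), hgx⟩
  have hIteC : ∀ (p : Prop) [Decidable p] (a : G),
      Disjoint (if p then L else ∅) (C a) := by
    intro p _ a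
    split
    · exact hLC a
    · exact Set.empty_disjoint _
  have hIteD : ∀ (p : Prop) [Decidable p] (a : G),
      Disjoint (if p then L else ∅) (D a) := by
    intro p _ a
    split
    · exact hLD a
    · exact Set.empty_disjoint _
  have hSS : ∀ i j : Fin 13, i ≠ j → Disjoint (S i) (S j) := by
    intro i j hij
    have hab : (e₁ i : G) ≠ (e₁ j : G) := fun h => hij (e₁.injective (Subtype.ext h))
    refine Disjoint.union_left (Disjoint.union_right ?_ ?_) (Disjoint.union_right ?_ ?_)
    · exact hCC _ _ hab
    · exact (hIteC _ _).symm
    · exact hIteC _ _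
    · by_cases ha : (e₁ i : G) = 1
      · by_cases hb : (e₁ j : G) = 1
        · exact absurd (ha.trans hb.symm) hab
        · simp only [hb, if_false]; exact Set.disjoint_empty _
      · simp only [ha, if_false]; exact Set.empty_disjoint _
  have hSTt : ∀ (i : Fin 13) (j : Fin 12), Disjoint (S i) (Tt j) := by
    intro i j
    exact Disjoint.union_left (hCD _ _) (hIteD _ _)
  have hTtTt : ∀ i j : Fin 12, i ≠ j → Disjoint (Tt i) (Tt j) := by
    intro i j hij
    exact hDD _ _ (fun h => hij (e₂.injective (Subtype.ext h)))
  refine le_trans (sInf_le ?_) le_rfl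
  refine ⟨13, 12, by norm_num, S, Tt, fun i => (e₁ i : G)⁻¹, fun j => (e₂ j : G)⁻¹,
    ?_, ?_, ?_, ?_⟩
  · rintro (i | i) (j | j) hij
    · exact hSS i j (fun h => hij (by rw [h]))
    · exact hSTt i j
    · exact (hSTt j i).symm
    · exact hTtTt i j (fun h => hij (by rw [h]))
  · rw [Set.eq_univ_iff_forall]
    intro x
    by_cases hx : x ∈ Set.range F
    · obtain ⟨⟨g, i⟩, rfl⟩ := hx
      fin_cases i
      · left
        refine Set.mem_iUnion.mpr ⟨e₁.symm ⟨t₁ g, ht₁T g⟩, Or.inl ?_⟩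
        exact ⟨g, by simp, rfl⟩
      · right
        refine Set.mem_iUnion.mpr ⟨e₂.symm ⟨t₂ g, ht₂T g⟩, ?_⟩
        exact ⟨g, by simp, rfl⟩
    · left
      refine Set.mem_iUnion.mpr ⟨e₁.symm ⟨1, hone⟩, Or.inr ?_⟩
      simp only [Equiv.apply_symm_apply, if_true]
      exact hx
  · rw [Set.eq_univ_iff_forall]
    intro x
    refine Set.mem_iUnion.mpr ⟨e₁.symm ⟨t₁ x, ht₁T x⟩, ?_⟩
    rw [Set.mem_inv_smul_set_iff]
    refine Or.inl ⟨x, by simp, ?_⟩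
    simp only [Equiv.apply_symm_apply, smul_eq_mul]
    exact ht₁ x
  · rw [Set.eq_univ_iff_forall]
    intro x
    refine Set.mem_iUnion.mpr ⟨e₂.symm ⟨t₂ x, ht₂T x⟩, ?_⟩
    rw [Set.mem_inv_smul_set_iff]
    refine ⟨x, by simp, ?_⟩
    simp only [Equiv.apply_symm_apply, smul_eq_mul]
    exact ht₂ x
end

section
/- A group G has Tarski number 4 if and only if G contains a subgroup isomorphic to the free group of rank 2. -/
open scoped Pointwise

set_option linter.unusedSectionVars false

lemma iUnion_fin_two {α : Type*} (f : Fin 2 → Set α) : (⋃ i, f i) = f 0 ∪ f 1 := by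
  ext x; simp [Fin.exists_fin_two]

lemma decomp_two_le {G : Type*} [Group G] {n m : ℕ} (h : IsParadoxicalDecomp G n m) :
    2 ≤ n ∧ 2 ≤ m := by
  obtain ⟨S, T, s, t, hdis, hcov, hS, hT⟩ := h
  have hne : ∀ k : ℕ, ∀ (f : Fin k → Set G), (⋃ i, f i) = Set.univ → k ≠ 0 := by
    intro k f hf hk
    subst hk
    have : (1 : G) ∈ (⋃ i : Fin 0, f i) := hf ▸ Set.mem_univ 1
    simp at this
  have hn0 : n ≠ 0 := hne n _ hS
  have hm0 : m ≠ 0 := hne m _ hT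
  constructor
  · rcases Nat.lt_or_ge n 2 with hn | hn
    · exfalso
      interval_cases n
      · exact hn0 rfl
      · -- n = 1 : S 0 = univ (after translation), so T j empty
        have h1 : s 0 • S 0 = Set.univ := by
          rw [← hS]; ext x; simp [Fin.exists_fin_one, Fin.fin_one_eq_zero]
        have hS0 : S 0 = Set.univ := by
          have := congrArg (fun A => (s 0)⁻¹ • A) h1
          simpa [smul_smul] using this
        have hTj : ∀ j, T j = ∅ := by
          intro j
          have hd : Disjoint (S 0) (T j) :=
            hdis (show (Sum.inl 0 : Fin 1 ⊕ Fin m) ≠ Sum.inr j by simp)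
          rw [hS0] at hd
          exact Set.eq_empty_iff_forall_notMem.2 fun x hx => Set.disjoint_left.1 hd (Set.mem_univ x) hx
        have : (1 : G) ∈ (⋃ j, t j • T j) := hT ▸ Set.mem_univ 1
        simp [hTj] at this
    · exact hn
  · rcases Nat.lt_or_ge m 2 with hm | hm
    · exfalso
      interval_cases m
      · exact hm0 rfl
      · have h1 : t 0 • T 0 = Set.univ := by
          rw [← hT]; ext x; simp [Fin.exists_fin_one, Fin.fin_one_eq_zero]
        have hT0 : T 0 = Set.univ := by
          have := congrArg (fun A => (t 0)⁻¹ • A) h1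
          simpa [smul_smul] using this
        have hSi : ∀ i, S i = ∅ := by
          intro i
          have hd : Disjoint (S i) (T 0) :=
            hdis (show (Sum.inl i : Fin n ⊕ Fin 1) ≠ Sum.inr 0 by simp)
          rw [hT0] at hd
          exact Set.eq_empty_iff_forall_notMem.2 fun x hx => Set.disjoint_right.1 hd (Set.mem_univ x) hx
        have : (1 : G) ∈ (⋃ i, s i • S i) := hS ▸ Set.mem_univ 1
        simp [hSi] at this
    · exact hm

lemma decomp_of_mulEquiv {G H : Type*} [Group G] [Group H] (e : G ≃* H) {n m : ℕ}
    (h : IsParadoxicalDecomp G n m) : IsParadoxicalDecomp H n m := by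
  obtain ⟨S, T, s, t, hdis, hcov, hS, hT⟩ := h
  have himg : ∀ (g : G) (A : Set G), e '' (g • A) = e g • (e '' A) := by
    intro g A
    ext y
    constructor
    · rintro ⟨x, ⟨a, ha, rfl⟩, rfl⟩
      exact ⟨e a, ⟨a, ha, rfl⟩, by simp [smul_eq_mul, map_mul]⟩
    · rintro ⟨x, ⟨a, ha, rfl⟩, rfl⟩
      exact ⟨g • a, ⟨a, ha, rfl⟩, by simp [smul_eq_mul, map_mul]⟩
  refine ⟨fun i => e '' S i, fun j => e '' T j, fun i => e (s i), fun j => e (t j), ?_, ?_, ?_, ?_⟩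
  · intro i j hij
    have := hdis hij
    unfold Function.onFun at this ⊢
    rcases i with i | i <;> rcases j with j | j <;>
      simpa [Set.disjoint_image_iff e.injective] using this
  · rw [← Set.image_iUnion, ← Set.image_iUnion, ← Set.image_union, hcov,
      Set.image_univ_of_surjective e.surjective]
  · have : (⋃ i, e (s i) • (e '' S i)) = e '' (⋃ i, s i • S i) := by
      rw [Set.image_iUnion]; exact Set.iUnion_congr fun i => (himg _ _).symm
    rw [this, hS, Set.image_univ_of_surjective e.surjective]
  · have : (⋃ j, e (t j) • (e '' T j)) = e '' (⋃ j, t j • T j) := by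
      rw [Set.image_iUnion]; exact Set.iUnion_congr fun j => (himg _ _).symm
    rw [this, hT, Set.image_univ_of_surjective e.surjective]

lemma decomp_of_subgroup {G : Type*} [Group G] (H : Subgroup G) {n m : ℕ}
    (h : IsParadoxicalDecomp H n m) : IsParadoxicalDecomp G n m := by
  classical
  obtain ⟨S, T, s, t, hdis, hcov, hS, hT⟩ := h
  set R := QuotientGroup.rightRel H with hR
  let rep : G → G := fun g => (Quotient.mk R g).out
  have hrep : ∀ g : G, g * (rep g)⁻¹ ∈ H := by
    intro g
    have : R (rep g) g := Quotient.mk_out (s := R) g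
    exact (QuotientGroup.rightRel_apply).1 this
  let φ : G → H := fun g => ⟨g * (rep g)⁻¹, hrep g⟩
  have hrep_mul : ∀ (h : H) (g : G), rep ((h : G) * g) = rep g := by
    intro h g
    have : Quotient.mk R ((h : G) * g) = Quotient.mk R g :=
      Quotient.sound ((QuotientGroup.rightRel_apply).2 (by simpa using h.2))
    simp only [rep, this]
  have hφ : ∀ (h : H) (g : G), φ ((h : G) * g) = h * φ g := by
    intro h g
    apply Subtype.ext
    simp only [φ, hrep_mul h g, Subgroup.coe_mul, mul_assoc]
  refine ⟨fun i => φ ⁻¹' S i, fun j => φ ⁻¹' T j, fun i => (s i : G), fun j => (t j : G),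
    ?_, ?_, ?_, ?_⟩
  · intro i j hij
    have := hdis hij
    unfold Function.onFun at this ⊢
    rcases i with i | i <;> rcases j with j | j <;> exact Disjoint.preimage φ this
  · ext x
    simp only [Set.mem_union, Set.mem_iUnion, Set.mem_preimage, Set.mem_univ, iff_true]
    have : φ x ∈ (⋃ i, S i) ∪ (⋃ j, T j) := hcov ▸ Set.mem_univ _
    simpa using this
  · ext x
    simp only [Set.mem_iUnion, Set.mem_univ, iff_true]
    have : φ x ∈ (⋃ i, s i • S i) := hS ▸ Set.mem_univ _
    obtain ⟨i, hi⟩ := Set.mem_iUnion.1 this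
    refine ⟨i, ?_⟩
    rw [Set.mem_smul_set_iff_inv_smul_mem] at hi ⊢
    simp only [Set.mem_preimage]
    have : φ ((s i : G)⁻¹ * x) = (s i)⁻¹ * φ x := by
      have := hφ (s i)⁻¹ x
      simpa using this
    simpa [smul_eq_mul, this] using hi
  · ext x
    simp only [Set.mem_iUnion, Set.mem_univ, iff_true]
    have : φ x ∈ (⋃ j, t j • T j) := hT ▸ Set.mem_univ _
    obtain ⟨j, hj⟩ := Set.mem_iUnion.1 this
    refine ⟨j, ?_⟩
    rw [Set.mem_smul_set_iff_inv_smul_mem] at hj ⊢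
    simp only [Set.mem_preimage]
    have : φ ((t j : G)⁻¹ * x) = (t j)⁻¹ * φ x := by
      have := hφ (t j)⁻¹ x
      simpa using this
    simpa [smul_eq_mul, this] using hj

namespace FG2decomp

abbrev F := FreeGroup (Fin 2)

/-- prepend a letter that does not cancel with the head -/
lemma toWord_cons_mul (x : Fin 2 × Bool) (w : F)
    (hx : w.toWord.head? ≠ some (x.1, !x.2)) :
    (FreeGroup.mk [x] * w).toWord = x :: w.toWord := by
  conv_lhs => rw [← FreeGroup.mk_toWord (x := w)]
  rw [FreeGroup.mul_mk, List.singleton_append, FreeGroup.toWord_mk, FreeGroup.reduce.cons]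
  rw [FreeGroup.reduce_toWord]
  cases hw : w.toWord with
  | nil => rfl
  | cons hd tl =>
    rw [hw] at hx
    have hcond : ¬(x.1 = hd.1 ∧ x.2 = !hd.2) := by
      rintro ⟨h1, h2⟩
      apply hx
      simp only [List.head?_cons, Option.some.injEq, Prod.ext_iff]
      exact ⟨h1.symm, by simp [h2]⟩
    simp [hcond]

noncomputable def N : Set F := {w | ∃ n : ℕ, w.toWord = List.replicate n ((0 : Fin 2), false)}

def headIs (x : Fin 2 × Bool) : Set F := {w | w.toWord.head? = some x}

noncomputable def P1 : Set F := headIs (0, true) ∪ N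
noncomputable def P2 : Set F := headIs (0, false) \ N
def P3 : Set F := headIs (1, true)
def P4 : Set F := headIs (1, false)

lemma mem_N_head (w : F) (hw : w ∈ N) :
    w.toWord.head? = none ∨ w.toWord.head? = some (0, false) := by
  obtain ⟨n, hn⟩ := hw
  cases n with
  | zero => left; simp [hn]
  | succ k => right; rw [hn, List.replicate_succ]; rfl

lemma headIs_disj {x y : Fin 2 × Bool} (h : x ≠ y) : Disjoint (headIs x) (headIs y) := by
  rw [Set.disjoint_left]
  intro w hw hw'
  exact h (by rw [headIs, Set.mem_setOf_eq] at hw hw'; exact Option.some_injective _ (hw ▸ hw'))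

lemma N_disj_headIs {x : Fin 2 × Bool} (h1 : x ≠ (0, false)) : Disjoint N (headIs x) := by
  rw [Set.disjoint_left]
  intro w hw hw'
  rcases mem_N_head w hw with h | h <;> rw [headIs, Set.mem_setOf_eq, h] at hw'
  · exact nomatch hw'
  · exact h1 (Option.some_injective _ hw').symm

lemma P_disj : Disjoint P1 P2 ∧ Disjoint P1 P3 ∧ Disjoint P1 P4 ∧ Disjoint P2 P3 ∧
    Disjoint P2 P4 ∧ Disjoint P3 P4 := by
  refine ⟨?_, ?_, ?_, ?_, ?_, ?_⟩
  · refine Set.disjoint_union_left.2 ⟨?_, ?_⟩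
    · exact Disjoint.mono_right Set.diff_subset (headIs_disj (by simp))
    · exact Set.disjoint_left.2 fun w hw hw' => hw'.2 hw
  · exact Set.disjoint_union_left.2 ⟨headIs_disj (by simp), N_disj_headIs (by simp)⟩
  · exact Set.disjoint_union_left.2 ⟨headIs_disj (by simp), N_disj_headIs (by simp)⟩
  · exact Disjoint.mono_left Set.diff_subset (headIs_disj (by simp))
  · exact Disjoint.mono_left Set.diff_subset (headIs_disj (by simp))
  · exact headIs_disj (by simp)

lemma P_cover : P1 ∪ P2 ∪ (P3 ∪ P4) = Set.univ := by
  ext w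
  simp only [Set.mem_union, Set.mem_univ, iff_true]
  cases hw : w.toWord with
  | nil =>
    left; left; right
    exact ⟨0, by simp [hw]⟩
  | cons hd tl =>
    obtain ⟨i, b⟩ := hd
    have hi : i = 0 ∨ i = 1 := by omega
    rcases hi with rfl | rfl <;> cases b
    · by_cases hN : w ∈ N
      · exact Or.inl (Or.inl (Or.inr hN))
      · exact Or.inl (Or.inr ⟨by simp [headIs, hw], hN⟩)
    · exact Or.inl (Or.inl (Or.inl (by simp [headIs, hw])))
    · exact Or.inr (Or.inr (by simp [P4, headIs, hw]))
    · exact Or.inr (Or.inl (by simp [P3, headIs, hw]))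

lemma a_inv : (FreeGroup.of (0 : Fin 2))⁻¹ = FreeGroup.mk [((0 : Fin 2), false)] := by
  rw [eq_comm, eq_inv_iff_mul_eq_one, FreeGroup.of, FreeGroup.mul_mk]
  have : FreeGroup.reduce [((0 : Fin 2), false), (0, true)] = FreeGroup.reduce [] := by decide
  rw [show (1 : F) = FreeGroup.mk [] from rfl]
  exact FreeGroup.reduce.exact this

lemma b_inv : (FreeGroup.of (1 : Fin 2))⁻¹ = FreeGroup.mk [((1 : Fin 2), false)] := by
  rw [eq_comm, eq_inv_iff_mul_eq_one, FreeGroup.of, FreeGroup.mul_mk]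
  have : FreeGroup.reduce [((1 : Fin 2), false), (1, true)] = FreeGroup.reduce [] := by decide
  rw [show (1 : F) = FreeGroup.mk [] from rfl]
  exact FreeGroup.reduce.exact this

lemma P_transA : P1 ∪ FreeGroup.of (0 : Fin 2) • P2 = Set.univ := by
  ext w
  simp only [Set.mem_union, Set.mem_univ, iff_true]
  by_cases hw : w ∈ P1
  · exact Or.inl hw
  right
  rw [Set.mem_smul_set_iff_inv_smul_mem, smul_eq_mul, a_inv]
  have hhead : w.toWord.head? ≠ some ((0 : Fin 2), true) := by
    intro h
    exact hw (Or.inl h)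
  have hN : w ∉ N := fun h => hw (Or.inr h)
  have hw' := toWord_cons_mul ((0 : Fin 2), false) w (by simpa using hhead)
  constructor
  · simp [headIs, hw']
  · rintro ⟨n, hn⟩
    rw [hw'] at hn
    cases n with
    | zero => simp at hn
    | succ k =>
      rw [List.replicate_succ] at hn
      exact hN ⟨k, by injection hn⟩

lemma P_transB : P3 ∪ FreeGroup.of (1 : Fin 2) • P4 = Set.univ := by
  ext w
  simp only [Set.mem_union, Set.mem_univ, iff_true]
  by_cases hw : w ∈ P3
  · exact Or.inl hw
  right
  rw [Set.mem_smul_set_iff_inv_smul_mem, smul_eq_mul, b_inv]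
  have hhead : w.toWord.head? ≠ some ((1 : Fin 2), true) := hw
  have hw' := toWord_cons_mul ((1 : Fin 2), false) w (by simpa using hhead)
  simp [P4, headIs, hw']

lemma decompF : IsParadoxicalDecomp F 2 2 := by
  refine ⟨![P1, P2], ![P3, P4], ![1, FreeGroup.of 0], ![1, FreeGroup.of 1], ?_, ?_, ?_, ?_⟩
  · obtain ⟨d12, d13, d14, d23, d24, d34⟩ := P_disj
    rintro (i | i) (j | j) hij <;> unfold Function.onFun <;> fin_cases i <;> fin_cases j <;>
      simp_all <;>
      first
        | exact d12 | exact d13 | exact d14 | exact d23 | exact d24 | exact d34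
        | exact d12.symm | exact d13.symm | exact d14.symm | exact d23.symm
        | exact d24.symm | exact d34.symm
  · rw [iUnion_fin_two, iUnion_fin_two]
    simpa using P_cover
  · rw [iUnion_fin_two]
    simpa using P_transA
  · rw [iUnion_fin_two]
    simpa using P_transB

end FG2decomp

namespace PingPong

variable {G : Type*} [Group G]

/-- The target set of a letter. -/
def tgt (A₁ A₂ B₁ B₂ : Set G) (x : Fin 2 × Bool) : Set G :=
  if x.1 = 0 then (if x.2 then A₁ else A₂) else (if x.2 then B₁ else B₂)

section

variable (A₁ A₂ B₁ B₂ : Set G) (σ τ : G)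

lemma tgt_0t : tgt A₁ A₂ B₁ B₂ ((0 : Fin 2), true) = A₁ := rfl
lemma tgt_0f : tgt A₁ A₂ B₁ B₂ ((0 : Fin 2), false) = A₂ := rfl
lemma tgt_1t : tgt A₁ A₂ B₁ B₂ ((1 : Fin 2), true) = B₁ := by simp [tgt]
lemma tgt_1f : tgt A₁ A₂ B₁ B₂ ((1 : Fin 2), false) = B₂ := by simp [tgt]

variable {A₁ A₂ B₁ B₂} {σ τ}

lemma pingpong_step (hA : A₁ ∪ σ • A₂ = Set.univ) (hB : B₁ ∪ τ • B₂ = Set.univ)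
    (x : Fin 2 × Bool) (z : G) (hz : z ∉ tgt A₁ A₂ B₁ B₂ (x.1, !x.2)) :
    (cond x.2 (![σ, τ] x.1) (![σ, τ] x.1)⁻¹) * z ∈ tgt A₁ A₂ B₁ B₂ x := by
  obtain ⟨i, b⟩ := x
  have hi : i = 0 ∨ i = 1 := by omega
  rcases hi with rfl | rfl <;> cases b <;>
    simp only [tgt_0t, tgt_0f, tgt_1t, tgt_1f, Bool.not_true, Bool.not_false,
      Matrix.cons_val_zero, Matrix.cons_val_one, Matrix.head_cons, cond_true, cond_false] at hz ⊢
  · -- x = (0, false) : σ⁻¹ * z ∈ A₂, z ∉ A₁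
    have h1 : z ∈ A₁ ∪ σ • A₂ := hA ▸ Set.mem_univ z
    rcases h1 with h1 | h1
    · exact absurd h1 hz
    · rwa [Set.mem_smul_set_iff_inv_smul_mem, smul_eq_mul] at h1
  · -- x = (0, true) : σ * z ∈ A₁, z ∉ A₂
    have h1 : σ * z ∈ A₁ ∪ σ • A₂ := hA ▸ Set.mem_univ _
    rcases h1 with h1 | h1
    · exact h1
    · rw [Set.mem_smul_set_iff_inv_smul_mem, smul_eq_mul, inv_mul_cancel_left] at h1
      exact absurd h1 hz
  · have h1 : z ∈ B₁ ∪ τ • B₂ := hB ▸ Set.mem_univ z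
    rcases h1 with h1 | h1
    · exact absurd h1 hz
    · rwa [Set.mem_smul_set_iff_inv_smul_mem, smul_eq_mul] at h1
  · have h1 : τ * z ∈ B₁ ∪ τ • B₂ := hB ▸ Set.mem_univ _
    rcases h1 with h1 | h1
    · exact h1
    · rw [Set.mem_smul_set_iff_inv_smul_mem, smul_eq_mul, inv_mul_cancel_left] at h1
      exact absurd h1 hz

lemma pingpong_aux (hdisj : ∀ x y : Fin 2 × Bool, x ≠ y →
      Disjoint (tgt A₁ A₂ B₁ B₂ x) (tgt A₁ A₂ B₁ B₂ y))
    (hA : A₁ ∪ σ • A₂ = Set.univ) (hB : B₁ ∪ τ • B₂ = Set.univ) :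
    ∀ L : List (Fin 2 × Bool),
      List.Chain' (fun a b => ¬(a.1 = b.1 ∧ a.2 = !b.2)) L →
      ∀ z x u, L.head? = some x → L.getLast? = some u →
        z ∉ tgt A₁ A₂ B₁ B₂ (u.1, !u.2) →
        (L.map (fun p => cond p.2 (![σ, τ] p.1) (![σ, τ] p.1)⁻¹)).prod * z ∈
          tgt A₁ A₂ B₁ B₂ x := by
  intro L
  induction L with
  | nil => intro _ z x u hx; exact absurd hx (by simp)
  | cons x' L' ih =>
    intro hchain z x u hx hu hz
    cases L' with
    | nil =>
      simp only [List.head?_cons, Option.some.injEq] at hx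
      simp only [List.getLast?_singleton, Option.some.injEq] at hu
      cases hx; cases hu
      simpa using pingpong_step hA hB x' z hz
    | cons y L'' =>
      rw [List.Chain', List.isChain_cons_cons] at hchain
      obtain ⟨hxy, hchain'⟩ := hchain
      simp only [List.head?_cons, Option.some.injEq] at hx
      cases hx
      rw [List.getLast?_cons_cons] at hu
      have hmem := ih hchain' z y u rfl hu hz
      have hyne : y ≠ (x'.1, !x'.2) := by
        rintro rfl
        exact hxy ⟨rfl, by simp⟩
      have hnot : (List.map (fun p => cond p.2 (![σ, τ] p.1) (![σ, τ] p.1)⁻¹)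
          (y :: L'')).prod * z ∉ tgt A₁ A₂ B₁ B₂ (x'.1, !x'.2) :=
        Set.disjoint_left.1 (hdisj y _ hyne) hmem
      have := pingpong_step hA hB x' _ hnot
      rw [List.map_cons, List.prod_cons, mul_assoc]
      exact this

end

/-- Chain' property of reduced words -/
lemma exists_decomp_of_not_chain' {α : Type*} {R : α → α → Prop} :
    ∀ L : List α, ¬ List.Chain' R L → ∃ l₁ a b l₂, L = l₁ ++ a :: b :: l₂ ∧ ¬ R a b := by
  intro L
  induction L with
  | nil => intro h; exact absurd List.isChain_nil h
  | cons x L ih =>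
    intro h
    cases L with
    | nil => exact absurd (List.isChain_singleton x) h
    | cons y L' =>
      rw [List.Chain', List.isChain_cons_cons] at h
      by_cases hxy : R x y
      · have : ¬ List.Chain' R (y :: L') := fun hc => h ⟨hxy, hc⟩
        obtain ⟨l₁, a, b, l₂, heq, hab⟩ := ih this
        exact ⟨x :: l₁, a, b, l₂, by rw [heq]; rfl, hab⟩
      · exact ⟨[], x, y, L', rfl, hxy⟩

lemma chain'_toWord {α : Type*} [DecidableEq α] (w : FreeGroup α) :
    List.Chain' (fun a b : α × Bool => ¬(a.1 = b.1 ∧ a.2 = !b.2)) w.toWord := by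
  classical
  by_contra h
  obtain ⟨l₁, a, b, l₂, heq, hab⟩ := exists_decomp_of_not_chain' _ h
  obtain ⟨h1, h2⟩ := not_not.1 hab
  have hb : b = (a.1, !a.2) := by
    rw [Prod.ext_iff]
    exact ⟨h1.symm, by rw [h2]; simp⟩
  refine FreeGroup.reduce.not (L₁ := w.toWord) (L₂ := l₁) (L₃ := l₂) (x := a.1) (b := a.2) ?_
  rw [FreeGroup.reduce_toWord, heq, hb]




lemma exists_avoid {K : Type*} [Group K] {A₁ A₂ B₁ B₂ : Set K} {σ τ : K}
    (d12 : Disjoint A₁ A₂) (d13 : Disjoint A₁ B₁) (d14 : Disjoint A₁ B₂)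
    (d23 : Disjoint A₂ B₁) (d24 : Disjoint A₂ B₂) (d34 : Disjoint B₁ B₂)
    (hA : A₁ ∪ σ • A₂ = Set.univ) (hB : B₁ ∪ τ • B₂ = Set.univ)
    (P Q : Set K) (hP : P = A₁ ∨ P = A₂ ∨ P = B₁ ∨ P = B₂)
    (hQ : Q = A₁ ∨ Q = A₂ ∨ Q = B₁ ∨ Q = B₂) :
    ∃ z, z ∉ P ∧ z ∉ Q := by
  have hAne : A₁ = ∅ → A₂ = ∅ → False := by
    intro h1 h2
    have := hA ▸ Set.mem_univ (1 : K)
    rw [h1, h2] at this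
    simpa using this
  have hBne : B₁ = ∅ → B₂ = ∅ → False := by
    intro h1 h2
    have := hB ▸ Set.mem_univ (1 : K)
    rw [h1, h2] at this
    simpa using this
  have hA2u : A₁ = ∅ → A₂ = Set.univ := by
    intro h1
    ext x
    simp only [Set.mem_univ, iff_true]
    have := hA ▸ Set.mem_univ (σ * x)
    rw [h1] at this
    rcases this with h | h
    · exact absurd h (Set.notMem_empty _)
    · rwa [Set.mem_smul_set_iff_inv_smul_mem, smul_eq_mul, inv_mul_cancel_left] at h
  have hA1u : A₂ = ∅ → A₁ = Set.univ := by
    intro h2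
    have := hA
    rw [h2] at this
    simpa using this
  have hB2u : B₁ = ∅ → B₂ = Set.univ := by
    intro h1
    ext x
    simp only [Set.mem_univ, iff_true]
    have := hB ▸ Set.mem_univ (τ * x)
    rw [h1] at this
    rcases this with h | h
    · exact absurd h (Set.notMem_empty _)
    · rwa [Set.mem_smul_set_iff_inv_smul_mem, smul_eq_mul, inv_mul_cancel_left] at h
  have hB1u : B₂ = ∅ → B₁ = Set.univ := by
    intro h2
    have := hB
    rw [h2] at this
    simpa using this
  have cu : ∀ {X Y : Set K}, Disjoint X Y → X = Set.univ → Y = Set.univ → False := by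
    intro X Y d hX hY
    rw [hX, hY] at d
    simpa using Set.disjoint_left.1 d (Set.mem_univ (1 : K))
  by_contra hcon
  push_neg at hcon
  have emptyOf : ∀ {X : Set K}, Disjoint X P → Disjoint X Q → X = ∅ := by
    intro X dP dQ
    rw [Set.eq_empty_iff_forall_notMem]
    intro x hx
    by_cases hxP : x ∈ P
    · exact Set.disjoint_left.1 dP hx hxP
    · exact Set.disjoint_left.1 dQ hx (hcon x hxP)
  rcases hP with rfl | rfl | rfl | rfl <;> rcases hQ with rfl | rfl | rfl | rfl
  · exact hBne (emptyOf d13.symm d13.symm) (emptyOf d14.symm d14.symm)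
  · exact hBne (emptyOf d13.symm d23.symm) (emptyOf d14.symm d24.symm)
  · exact cu d13 (hA1u (emptyOf d12.symm d23)) (hB1u (emptyOf d14.symm d34.symm))
  · exact cu d14 (hA1u (emptyOf d12.symm d24)) (hB2u (emptyOf d13.symm d34))
  · exact hBne (emptyOf d23.symm d13.symm) (emptyOf d24.symm d14.symm)
  · exact hBne (emptyOf d23.symm d23.symm) (emptyOf d24.symm d24.symm)
  · exact cu d23 (hA2u (emptyOf d12 d13)) (hB1u (emptyOf d24.symm d34.symm))
  · exact cu d24 (hA2u (emptyOf d12 d14)) (hB2u (emptyOf d23.symm d34))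
  · exact cu d13 (hA1u (emptyOf d23 d12.symm)) (hB1u (emptyOf d34.symm d14.symm))
  · exact cu d23 (hA2u (emptyOf d13 d12)) (hB1u (emptyOf d34.symm d24.symm))
  · exact hAne (emptyOf d13 d13) (emptyOf d23 d23)
  · exact hAne (emptyOf d13 d14) (emptyOf d23 d24)
  · exact cu d14 (hA1u (emptyOf d24 d12.symm)) (hB2u (emptyOf d34 d13.symm))
  · exact cu d24 (hA2u (emptyOf d14 d12)) (hB2u (emptyOf d34 d23.symm))
  · exact hAne (emptyOf d14 d13) (emptyOf d24 d23)
  · exact hAne (emptyOf d14 d14) (emptyOf d24 d24)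


lemma free_of_decomp {G : Type*} [Group G] (h : IsParadoxicalDecomp G 2 2) :
    ∃ H : Subgroup G, Nonempty (H ≃* FreeGroup (Fin 2)) := by
  classical
  obtain ⟨S, T, s, t, hdis, hcov, hS, hT⟩ := h
  set σ := (s 0)⁻¹ * s 1 with hσ
  set τ := (t 0)⁻¹ * t 1 with hτ
  -- coverings
  have hA : S 0 ∪ σ • S 1 = Set.univ := by
    ext x
    simp only [Set.mem_union, Set.mem_univ, iff_true]
    have hx : s 0 * x ∈ (⋃ i, s i • S i) := hS ▸ Set.mem_univ _
    rw [iUnion_fin_two] at hx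
    rcases hx with hx | hx
    · left
      rwa [Set.mem_smul_set_iff_inv_smul_mem, smul_eq_mul, inv_mul_cancel_left] at hx
    · right
      rw [Set.mem_smul_set_iff_inv_smul_mem, smul_eq_mul] at hx ⊢
      rw [hσ, mul_inv_rev, inv_inv, mul_assoc]
      exact hx
  have hB : T 0 ∪ τ • T 1 = Set.univ := by
    ext x
    simp only [Set.mem_union, Set.mem_univ, iff_true]
    have hx : t 0 * x ∈ (⋃ j, t j • T j) := hT ▸ Set.mem_univ _
    rw [iUnion_fin_two] at hx
    rcases hx with hx | hx
    · left
      rwa [Set.mem_smul_set_iff_inv_smul_mem, smul_eq_mul, inv_mul_cancel_left] at hx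
    · right
      rw [Set.mem_smul_set_iff_inv_smul_mem, smul_eq_mul] at hx ⊢
      rw [hτ, mul_inv_rev, inv_inv, mul_assoc]
      exact hx
  -- disjointness
  have dd : ∀ p q : Fin 2 ⊕ Fin 2, p ≠ q → Disjoint (Sum.elim S T p) (Sum.elim S T q) :=
    fun p q hpq => hdis hpq
  have d12 : Disjoint (S 0) (S 1) := dd (.inl 0) (.inl 1) (by simp)
  have d13 : Disjoint (S 0) (T 0) := dd (.inl 0) (.inr 0) (by simp)
  have d14 : Disjoint (S 0) (T 1) := dd (.inl 0) (.inr 1) (by simp)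
  have d23 : Disjoint (S 1) (T 0) := dd (.inl 1) (.inr 0) (by simp)
  have d24 : Disjoint (S 1) (T 1) := dd (.inl 1) (.inr 1) (by simp)
  have d34 : Disjoint (T 0) (T 1) := dd (.inr 0) (.inr 1) (by simp)
  -- tgt values
  have htgt : ∀ x : Fin 2 × Bool, tgt (S 0) (S 1) (T 0) (T 1) x = S 0 ∨
      tgt (S 0) (S 1) (T 0) (T 1) x = S 1 ∨ tgt (S 0) (S 1) (T 0) (T 1) x = T 0 ∨
      tgt (S 0) (S 1) (T 0) (T 1) x = T 1 := by
    rintro ⟨i, b⟩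
    have hi : i = 0 ∨ i = 1 := by omega
    rcases hi with rfl | rfl <;> cases b
    · exact Or.inr (Or.inl (tgt_0f _ _ _ _))
    · exact Or.inl (tgt_0t _ _ _ _)
    · exact Or.inr (Or.inr (Or.inr (tgt_1f _ _ _ _)))
    · exact Or.inr (Or.inr (Or.inl (tgt_1t _ _ _ _)))
  have hdisj : ∀ x y : Fin 2 × Bool, x ≠ y →
      Disjoint (tgt (S 0) (S 1) (T 0) (T 1) x) (tgt (S 0) (S 1) (T 0) (T 1) y) := by
    rintro ⟨i, b⟩ ⟨j, c⟩ hne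
    have hi : i = 0 ∨ i = 1 := by omega
    have hj : j = 0 ∨ j = 1 := by omega
    rcases hi with rfl | rfl <;> rcases hj with rfl | rfl <;> cases b <;> cases c <;>
      simp only [tgt_0t, tgt_0f, tgt_1t, tgt_1f] <;>
      first
        | exact absurd rfl hne
        | exact d12 | exact d13 | exact d14 | exact d23 | exact d24 | exact d34
        | exact d12.symm | exact d13.symm | exact d14.symm | exact d23.symm
        | exact d24.symm | exact d34.symm
  -- injectivity of the lift
  have hinj : Function.Injective (FreeGroup.lift ![σ, τ]) := by
    rw [injective_iff_map_eq_one]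
    intro w hw
    by_contra hw1
    have hL : w.toWord ≠ [] := fun h => hw1 (FreeGroup.toWord_eq_nil_iff.1 h)
    obtain ⟨x, hx⟩ := Option.ne_none_iff_exists'.1 (mt List.head?_eq_none_iff.1 hL)
    obtain ⟨u, hu⟩ := Option.ne_none_iff_exists'.1 (mt List.getLast?_eq_none_iff.1 hL)
    obtain ⟨z, hz1, hz2⟩ := exists_avoid d12 d13 d14 d23 d24 d34 hA hB
      (tgt (S 0) (S 1) (T 0) (T 1) (u.1, !u.2)) (tgt (S 0) (S 1) (T 0) (T 1) x)
      (htgt _) (htgt _)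
    have hmain := pingpong_aux hdisj hA hB w.toWord (chain'_toWord w) z x u hx hu hz1
    have hprod : (List.map (fun p => cond p.2 (![σ, τ] p.1) (![σ, τ] p.1)⁻¹) w.toWord).prod
        = FreeGroup.lift ![σ, τ] w := by
      conv_rhs => rw [← FreeGroup.mk_toWord (x := w)]
      rw [FreeGroup.lift_mk]
    rw [hprod, hw, one_mul] at hmain
    exact hz2 hmain
  exact ⟨(FreeGroup.lift ![σ, τ]).range, ⟨(MonoidHom.ofInjective hinj).symm⟩⟩

end PingPong


theorem stmt_15 {G : Type*} [Group G] :
    TarskiNumber G = 4 ↔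
      ∃ H : Subgroup G, Nonempty (H ≃* FreeGroup (Fin 2)) := by
  classical
  have hge : ∀ k ∈ {k : ℕ∞ | ∃ n m : ℕ, k = (n : ℕ∞) + m ∧ IsParadoxicalDecomp G n m},
      (4 : ℕ∞) ≤ k := by
    rintro k ⟨n, m, rfl, hd⟩
    obtain ⟨hn, hm⟩ := decomp_two_le hd
    have h4 : ((4 : ℕ) : ℕ∞) ≤ ((n + m : ℕ) : ℕ∞) := Nat.cast_le.2 (by omega)
    rw [Nat.cast_add] at h4
    simpa using h4
  rw [TarskiNumber]
  constructor
  · intro h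
    have h4 : (4 : ℕ∞) ∈ {k : ℕ∞ | ∃ n m : ℕ, k = (n : ℕ∞) + m ∧
        IsParadoxicalDecomp G n m} := by
      by_contra h4
      have h5 : (5 : ℕ∞) ≤ sInf {k : ℕ∞ | ∃ n m : ℕ, k = (n : ℕ∞) + m ∧
          IsParadoxicalDecomp G n m} := by
        apply le_sInf
        rintro k ⟨n, m, rfl, hd⟩
        obtain ⟨hn, hm⟩ := decomp_two_le hd
        have hne : n + m ≠ 4 := by
          intro hnm
          refine h4 ⟨n, m, ?_, hd⟩
          rw [← Nat.cast_add, hnm]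
          norm_num
        have h5' : ((5 : ℕ) : ℕ∞) ≤ ((n + m : ℕ) : ℕ∞) := Nat.cast_le.2 (by omega)
        rw [Nat.cast_add] at h5'
        simpa using h5'
      rw [h] at h5
      norm_num at h5
    obtain ⟨n, m, hnm, hd⟩ := h4
    obtain ⟨hn, hm⟩ := decomp_two_le hd
    have hnm' : n + m = 4 := by
      have : ((n + m : ℕ) : ℕ∞) = ((4 : ℕ) : ℕ∞) := by
        rw [Nat.cast_add, ← hnm]
        norm_num
      exact_mod_cast this
    have hn2 : n = 2 := by omega
    have hm2 : m = 2 := by omega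
    subst hn2; subst hm2
    exact PingPong.free_of_decomp hd
  · rintro ⟨H, ⟨e⟩⟩
    have hd : IsParadoxicalDecomp G 2 2 :=
      decomp_of_subgroup H (decomp_of_mulEquiv e.symm FG2decomp.decompF)
    have hmem : (4 : ℕ∞) ∈ {k : ℕ∞ | ∃ n m : ℕ, k = (n : ℕ∞) + m ∧
        IsParadoxicalDecomp G n m} := by
      refine ⟨2, 2, ?_, hd⟩
      norm_num
    exact le_antisymm (sInf_le hmem) (le_sInf hge)
end
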